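/- arXiv:2512.13805 — 6 statements merged into one kernel-verified Lean document; each statement's English description precedes it below -/
import Mathlib

section
/- Apolarity Lemma: Let f ∈ ℂ[x_0,…,x_n] be homogeneous of degree d, and let ℓ_1, …, ℓ_r be pairwise non-proportional nonzero linear forms. Then there exist scalars λ_1,…,λ_r ∈ ℂ with f = λ_1 ℓ_1^d + ⋯ + λ_r ℓ_r^d if and only if the homogeneous ideal I(𝕏) of the set of points 𝕏 = {[ℓ_1],…,[ℓ_r]} ⊆ ℙ^n is contained in the apolar ideal Ann(f). -/
/-!
For `F` homogeneous of degree `e` and a linear form `ℓ`, `F ⌟ ℓ^d = d!/(d-e)! · F(ℓ) · ℓ^(d-e)`,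
where `F(ℓ)` is `F` evaluated at the coefficient vector of `ℓ`. Hence forms vanishing at the
points annihilate every combination of the `ℓ_i^d`. Conversely, in degree `d` the apolarity
pairing `x^m ⌟ x^k = m! δ_{mk}` is perfect, so every linear functional on forms of degree `d` is
`g ↦ F ⌟ g` for some `F` of degree `d`. If `f` is not in the span of the `ℓ_i^d`, a functional
killing the `ℓ_i^d` but not `f` yields such an `F`; then `d! · F(ℓ_i) = F ⌟ ℓ_i^d = 0` while
`F ⌟ f ≠ 0`.
-/

open MvPolynomial

noncomputable def monoDeriv {n : ℕ} (m : Fin n →₀ ℕ) :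
    Module.End ℂ (MvPolynomial (Fin n) ℂ) :=
  ((List.finRange n).map
    (fun i => ((pderiv i : Derivation ℂ (MvPolynomial (Fin n) ℂ) (MvPolynomial (Fin n) ℂ)).toLinearMap) ^ (m i))).prod

/-- `apolarAct D f` is the result `D ⌟ f` of applying `D` to `f` as a
differential operator with constant coefficients (`X i` acts as `∂/∂x i`). -/
noncomputable def apolarAct {n : ℕ} (D f : MvPolynomial (Fin n) ℂ) : MvPolynomial (Fin n) ℂ :=
  ∑ m ∈ D.support, D.coeff m • monoDeriv m f

section PartialDerivatives

variable {σ R : Type*} [CommSemiring R]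

lemma pderiv_pow_monomial (i : σ) (t : ℕ) (k : σ →₀ ℕ) (c : R) :
    ((pderiv i).toLinearMap ^ t) (monomial k c) =
      monomial (k - Finsupp.single i t) (c * (k i).descFactorial t) := by
  induction t with
  | zero => simp
  | succ t ih =>
    rw [pow_succ', Module.End.mul_apply, ih, Derivation.coeFn_coe, pderiv_monomial,
      Finsupp.tsub_apply, Finsupp.single_eq_same, tsub_tsub, ← Finsupp.single_add,
      Nat.descFactorial_succ]
    push_cast
    ring_nf

lemma pderiv_eq_C_of_isHomogeneous_one {ℓ : MvPolynomial σ R} (hℓ : ℓ.IsHomogeneous 1) (i : σ) :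
    pderiv i ℓ = C (coeff (Finsupp.single i 1) ℓ) := by
  have h0 : (pderiv i ℓ).IsHomogeneous 0 := hℓ.pderiv
  rw [← totalDegree_zero_iff_isHomogeneous, totalDegree_eq_zero_iff_eq_C, coeff_pderiv] at h0
  simpa using h0

lemma pderiv_pow_pow_of_isHomogeneous_one {ℓ : MvPolynomial σ R} (hℓ : ℓ.IsHomogeneous 1)
    (i : σ) (t k : ℕ) :
    ((pderiv i).toLinearMap ^ t) (ℓ ^ k) =
      ((k.descFactorial t : R) * coeff (Finsupp.single i 1) ℓ ^ t) • ℓ ^ (k - t) := by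
  induction t with
  | zero => simp
  | succ t ih =>
    rw [pow_succ', Module.End.mul_apply, ih, map_smul, Derivation.coeFn_coe,
      (pderiv i).leibniz_pow, pderiv_eq_C_of_isHomogeneous_one hℓ, Nat.sub_sub,
      Nat.descFactorial_succ, smul_eq_C_mul, smul_eq_C_mul, nsmul_eq_mul, smul_eq_mul]
    push_cast
    simp only [map_mul, map_pow, map_natCast]
    ring

lemma list_sum_single_apply_of_notMem (m : σ →₀ ℕ) {L : List σ} {i : σ} (hi : i ∉ L) :
    (L.map fun j => Finsupp.single j (m j)).sum i = 0 := by
  rw [← Finsupp.applyAddHom_apply, map_list_sum, List.map_map]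
  refine List.sum_eq_zero fun x hx => ?_
  obtain ⟨j, hj, rfl⟩ := List.mem_map.mp hx
  exact Finsupp.single_eq_of_ne (fun h => hi (h ▸ hj))

lemma list_prod_pderiv_pow_monomial (m : σ →₀ ℕ) {L : List σ} (hL : L.Nodup)
    (k : σ →₀ ℕ) (c : R) :
    (L.map fun i => (pderiv i).toLinearMap ^ m i).prod (monomial k c) =
      monomial (k - (L.map fun i => Finsupp.single i (m i)).sum)
        (c * (L.map fun i => ((k i).descFactorial (m i) : R)).prod) := by
  induction L with
  | nil => simp
  | cons i L ih =>
    obtain ⟨hi, hL⟩ := List.nodup_cons.mp hL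
    rw [List.map_cons, List.prod_cons, Module.End.mul_apply, ih hL, pderiv_pow_monomial,
      Finsupp.tsub_apply, list_sum_single_apply_of_notMem m hi, Nat.sub_zero, tsub_tsub,
      List.map_cons, List.sum_cons, add_comm, List.map_cons, List.prod_cons]
    ring_nf

lemma list_prod_pderiv_pow_pow_of_isHomogeneous_one {ℓ : MvPolynomial σ R}
    (hℓ : ℓ.IsHomogeneous 1) (m : σ →₀ ℕ) (L : List σ) (k : ℕ) :
    (L.map fun i => (pderiv i).toLinearMap ^ m i).prod (ℓ ^ k) =
      ((k.descFactorial (L.map m).sum : R) *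
        (L.map fun i => coeff (Finsupp.single i 1) ℓ ^ m i).prod) • ℓ ^ (k - (L.map m).sum) := by
  induction L with
  | nil => simp
  | cons i L ih =>
    have hdesc : k.descFactorial ((L.map m).sum + m i) =
        (k - (L.map m).sum).descFactorial (m i) * k.descFactorial (L.map m).sum := by
      simpa using (Nat.descFactorial_mul_descFactorial (n := k) (Nat.le_add_right _ (m i))).symm
    rw [List.map_cons, List.prod_cons, Module.End.mul_apply, ih, map_smul,
      pderiv_pow_pow_of_isHomogeneous_one hℓ, smul_smul, Nat.sub_sub, List.map_cons,
      List.sum_cons, add_comm (m i), hdesc, List.map_cons, List.prod_cons]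
    push_cast
    ring_nf

end PartialDerivatives

section MonoDeriv

variable {N : ℕ}

lemma monoDeriv_monomial (m k : Fin N →₀ ℕ) (c : ℂ) :
    monoDeriv m (monomial k c) =
      monomial (k - m) (c * ∏ i, ((k i).descFactorial (m i) : ℂ)) := by
  rw [monoDeriv, list_prod_pderiv_pow_monomial m (List.nodup_finRange N), ← Fin.sum_univ_def,
    Finsupp.univ_sum_single, ← Fin.prod_univ_def]

lemma monoDeriv_monomial_of_degree_eq {m k : Fin N →₀ ℕ} (hmk : m.degree = k.degree) (c : ℂ) :
    monoDeriv m (monomial k c) = if k = m then C (c * ∏ i, ((m i).factorial : ℂ)) else 0 := by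
  rw [monoDeriv_monomial]
  split_ifs with hkm
  · simp [hkm, Nat.descFactorial_self]
  obtain ⟨i, hi⟩ : ∃ i, k i < m i := by
    by_contra! hle
    refine hkm (Finsupp.ext fun i => ?_)
    simp only [Finsupp.degree_eq_sum] at hmk
    exact ((Finset.sum_eq_sum_iff_of_le fun i _ => hle i).mp hmk i (Finset.mem_univ i)).symm
  rw [Finset.prod_eq_zero (Finset.mem_univ i) (by simp [Nat.descFactorial_eq_zero_iff_lt.mpr hi]),
    mul_zero, monomial_zero]

lemma monoDeriv_of_isHomogeneous {m : Fin N →₀ ℕ} {g : MvPolynomial (Fin N) ℂ}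
    (hg : g.IsHomogeneous m.degree) :
    monoDeriv m g = C (coeff m g * ∏ i, ((m i).factorial : ℂ)) := by
  conv_lhs => rw [g.as_sum, map_sum]
  rw [Finset.sum_eq_single m]
  · rw [monoDeriv_monomial_of_degree_eq rfl, if_pos rfl]
  · intro k hk hkm
    rw [monoDeriv_monomial_of_degree_eq (hg.degree_eq_sum_deg_support hk), if_neg hkm]
  · intro hm
    rw [notMem_support_iff.mp hm, monomial_zero, map_zero]

end MonoDeriv

section ApolarAct

variable {N : ℕ}

lemma apolarAct_eq_sum_of_support_subset {D : MvPolynomial (Fin N) ℂ} {S : Finset (Fin N →₀ ℕ)}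
    (hS : D.support ⊆ S) (f : MvPolynomial (Fin N) ℂ) :
    apolarAct D f = ∑ m ∈ S, coeff m D • monoDeriv m f :=
  Finset.sum_subset hS fun m _ hm => by rw [notMem_support_iff.mp hm, zero_smul]

lemma apolarAct_sum_smul {ι : Type*} (F : MvPolynomial (Fin N) ℂ) (s : Finset ι) (c : ι → ℂ)
    (g : ι → MvPolynomial (Fin N) ℂ) :
    apolarAct F (∑ i ∈ s, c i • g i) = ∑ i ∈ s, c i • apolarAct F (g i) := by
  simp only [apolarAct, map_sum, map_smul, Finset.smul_sum]
  rw [Finset.sum_comm]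
  exact Finset.sum_congr rfl fun _ _ => Finset.sum_congr rfl fun _ _ => smul_comm _ _ _

lemma monoDeriv_pow_of_isHomogeneous_one {ℓ : MvPolynomial (Fin N) ℂ} (hℓ : ℓ.IsHomogeneous 1)
    (m : Fin N →₀ ℕ) (d : ℕ) :
    monoDeriv m (ℓ ^ d) = ((d.descFactorial m.degree : ℂ) *
      ∏ i, coeff (Finsupp.single i 1) ℓ ^ m i) • ℓ ^ (d - m.degree) := by
  rw [monoDeriv, list_prod_pderiv_pow_pow_of_isHomogeneous_one hℓ, Finsupp.degree_eq_sum,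
    Fin.sum_univ_def, Fin.prod_univ_def]

lemma apolarAct_pow_of_isHomogeneous_one {ℓ : MvPolynomial (Fin N) ℂ} (hℓ : ℓ.IsHomogeneous 1)
    {F : MvPolynomial (Fin N) ℂ} {e : ℕ} (hF : F.IsHomogeneous e) (d : ℕ) :
    apolarAct F (ℓ ^ d) =
      ((d.descFactorial e : ℂ) * eval (fun j => coeff (Finsupp.single j 1) ℓ) F) • ℓ ^ (d - e) := by
  rw [apolarAct, eval_eq', Finset.mul_sum, Finset.sum_smul]
  refine Finset.sum_congr rfl fun m hm => ?_
  have hdeg : m.degree = e := (hF.degree_eq_sum_deg_support hm).symm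
  rw [monoDeriv_pow_of_isHomogeneous_one hℓ, hdeg, smul_smul]
  ring_nf

lemma exists_isHomogeneous_apolarAct_eq_C (φ : Module.Dual ℂ (MvPolynomial (Fin N) ℂ)) (d : ℕ) :
    ∃ F : MvPolynomial (Fin N) ℂ, F.IsHomogeneous d ∧
      ∀ g : MvPolynomial (Fin N) ℂ, g.IsHomogeneous d → apolarAct F g = C (φ g) := by
  set T := (Finsupp.finite_of_degree_eq (σ := Fin N) d).toFinset
  have hT : ∀ m, m ∈ T ↔ m.degree = d := by simp [T]
  -- the coefficients are chosen so that `F ⌟ x^m = φ (x^m)`, as `x^m ⌟ x^m = m!`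
  set w : (Fin N →₀ ℕ) → ℂ := fun m => φ (monomial m 1) / ∏ i, ((m i).factorial : ℂ)
  refine ⟨∑ m ∈ T, monomial m (w m),
    IsHomogeneous.sum _ _ _ fun m hm => isHomogeneous_monomial _ ((hT m).mp hm),
    fun g hg => ?_⟩
  have hsupp : g.support ⊆ T := fun m hm => (hT m).mpr (hg.degree_eq_sum_deg_support hm).symm
  have hφg : φ g = ∑ m ∈ T, coeff m g * φ (monomial m 1) := by
    conv_lhs => rw [g.as_sum]
    rw [map_sum, Finset.sum_subset hsupp fun m _ hm => by
      rw [notMem_support_iff.mp hm, monomial_zero, map_zero]]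
    refine Finset.sum_congr rfl fun m _ => ?_
    rw [← smul_eq_mul, ← map_smul, smul_monomial, smul_eq_mul, mul_one]
  rw [apolarAct_eq_sum_of_support_subset (support_sum.trans ?_), hφg, map_sum]
  · refine Finset.sum_congr rfl fun m hm => ?_
    rw [monoDeriv_of_isHomogeneous ((hT m).mp hm ▸ hg)]
    have hfac : ∏ i, ((m i).factorial : ℂ) ≠ 0 :=
      Finset.prod_ne_zero_iff.mpr fun i _ => Nat.cast_ne_zero.mpr (Nat.factorial_ne_zero _)
    simp only [coeff_sum, coeff_monomial, Finset.sum_ite_eq', if_pos hm, smul_eq_C_mul, ← map_mul,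
      w]
    field_simp
  · exact Finset.biUnion_subset.mpr fun m hm =>
      support_monomial_subset.trans (Finset.singleton_subset_iff.mpr hm)

end ApolarAct

theorem stmt1_general (n d r : ℕ) (f : MvPolynomial (Fin (n+1)) ℂ) (hf : f.IsHomogeneous d)
    (ℓ : Fin r → MvPolynomial (Fin (n+1)) ℂ)
    (hhom : ∀ i, (ℓ i).IsHomogeneous 1) :
    (∃ lam : Fin r → ℂ, f = ∑ i, lam i • (ℓ i) ^ d) ↔
      (∀ (F : MvPolynomial (Fin (n+1)) ℂ) (e : ℕ), F.IsHomogeneous e →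
        (∀ i, eval (fun j => coeff (Finsupp.single j 1) (ℓ i)) F = 0) →
        apolarAct F f = 0) := by
  constructor
  · rintro ⟨lam, rfl⟩ F e hF hvan
    rw [apolarAct_sum_smul]
    refine Finset.sum_eq_zero fun i _ => ?_
    rw [apolarAct_pow_of_isHomogeneous_one (hhom i) hF, hvan i, mul_zero, zero_smul, smul_zero]
  intro H
  by_contra hspan
  have hf_notMem : f ∉ Submodule.span ℂ (Set.range fun i => ℓ i ^ d) := fun hmem =>
    have ⟨lam, hlam⟩ := (Submodule.mem_span_range_iff_exists_fun ℂ).mp hmem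
    hspan ⟨lam, hlam.symm⟩
  obtain ⟨φ, hφf, hφspan⟩ := Submodule.exists_dual_map_eq_bot_of_notMem hf_notMem inferInstance
  have hφℓ (i : Fin r) : φ (ℓ i ^ d) = 0 :=
    LinearMap.le_ker_iff_map.mpr hφspan (Submodule.subset_span ⟨i, rfl⟩)
  obtain ⟨F, hF, hFφ⟩ := exists_isHomogeneous_apolarAct_eq_C φ d
  refine hφf ((C_eq_zero (σ := Fin (n+1))).mp ?_)
  rw [← hFφ f hf]
  refine H F d hF fun i => ?_
  have hℓF := hFφ _ (by simpa using (hhom i).pow d)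
  rw [apolarAct_pow_of_isHomogeneous_one (hhom i) hF, hφℓ i, Nat.sub_self, pow_zero,
    Nat.descFactorial_self, smul_eq_C_mul, mul_one, map_zero] at hℓF
  simpa [Nat.factorial_ne_zero] using hℓF

/-- Apolarity Lemma: `f` (homogeneous of degree `d`) is a linear combination of the
`d`-th powers of the pairwise non-proportional nonzero linear forms `ℓ i` iff the
homogeneous ideal of the corresponding set of points of `ℙⁿ` is contained in `Ann f`,
i.e. iff every homogeneous form vanishing at all the points is apolar to `f`. -/
theorem stmt1 (n d r : ℕ) (f : MvPolynomial (Fin (n+1)) ℂ) (hf : f.IsHomogeneous d)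
    (ℓ : Fin r → MvPolynomial (Fin (n+1)) ℂ)
    (hhom : ∀ i, (ℓ i).IsHomogeneous 1) (hne : ∀ i, ℓ i ≠ 0)
    (hprop : ∀ i j, i ≠ j → ∀ c : ℂ, ℓ i ≠ c • ℓ j) :
    (∃ lam : Fin r → ℂ, f = ∑ i, lam i • (ℓ i) ^ d) ↔
      (∀ (F : MvPolynomial (Fin (n+1)) ℂ) (e : ℕ), F.IsHomogeneous e →
        (∀ i, eval (fun j => coeff (Finsupp.single j 1) (ℓ i)) F = 0) →
        apolarAct F f = 0) :=
  stmt1_general n d r f hf ℓ hhom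
end

section
/- Let k ≥ 2. The Waring rank of the binary form f = x^k y^k + x^{2k} over ℂ equals k+1. -/
open MvPolynomial

/-- The linear form with coefficient vector `a`. -/
noncomputable def linForm {n : ℕ} (a : Fin n → ℂ) : MvPolynomial (Fin n) ℂ :=
  ∑ j, C (a j) * X j

/-- The Waring rank of a degree-`d` form `f`: the least `r` such that `f` is a
linear combination of `r` `d`-th powers of linear forms. -/
noncomputable def waringRank {n : ℕ} (d : ℕ) (f : MvPolynomial (Fin n) ℂ) : ℕ :=
  sInf {r : ℕ | ∃ (a : Fin r → Fin n → ℂ) (c : Fin r → ℂ),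
    f = ∑ i, c i • (linForm (a i)) ^ d}

/-!
Lower bound: the middle catalecticant of a binary form of degree `2k` depends linearly on the
form and sends `ℓ ^ (2k)` to a rank-one matrix, so its rank is at most the Waring rank. For
`x^k y^k + x^(2k)` it vanishes above the anti-diagonal and not on it, so it has rank `k + 1`.

Upper bound: summing `(ω ζ^j x + y) ^ (2k)` over the `k`-th roots of unity `ζ^j` kills every
monomial whose `x`-degree is not divisible by `k`, leaving `y^(2k)`, `x^k y^k` and `x^(2k)`.
Taking `ω^k = binom(2k, k)` gives the last two equal coefficients, and one more power `y^(2k)`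
removes the first.
-/

open Finset
open Finsupp (single single_zero)

theorem Matrix.rank_eq_of_antitriangular {K : Type*} [Field K] {n : ℕ}
    (M : Matrix (Fin n) (Fin n) K) (hzero : ∀ i j, j < Fin.rev i → M i j = 0)
    (hanti : ∀ i, M i (Fin.rev i) ≠ 0) : M.rank = n := by
  have hlower : (M.submatrix id Fin.rev).IsLowerTriangular := fun i j hij =>
    hzero i _ (Fin.rev_lt_rev.2 hij)
  have hdet : (M.submatrix id Fin.rev).det ≠ 0 := by
    rw [det_of_isLowerTriangular _ hlower]
    exact prod_ne_zero_iff.2 fun i _ => hanti i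
  calc M.rank = (M.submatrix id Fin.rev).rank :=
        (M.rank_submatrix (Equiv.refl _) Fin.revPerm).symm
    _ = n := by rw [rank_of_isUnit _ ((isUnit_iff_isUnit_det _).2 hdet.isUnit), Fintype.card_fin]

theorem single_add_single_inj {m n m' n' : ℕ} :
    single (0 : Fin 2) m + single 1 n = single 0 m' + single 1 n' ↔ m = m' ∧ n = n' := by
  simp [Finsupp.ext_iff, Fin.forall_fin_two]

theorem linForm_two (a : Fin 2 → ℂ) : linForm a = C (a 0) * X 0 + C (a 1) * X 1 := by
  simp [linForm, Fin.sum_univ_two]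

theorem coeff_linForm_pow (a : Fin 2 → ℂ) (m n : ℕ) :
    coeff (single 0 m + single 1 n) (linForm a ^ (m + n)) =
      (m + n).choose m * a 0 ^ m * a 1 ^ n := by
  have hterm : ∀ p q, (C (a 0) * X 0) ^ p * (C (a 1) * X 1) ^ q =
      (monomial (single 0 p + single 1 q) (a 0 ^ p * a 1 ^ q) : MvPolynomial (Fin 2) ℂ) := by
    intro p q
    rw [mul_pow, mul_pow, ← C_pow, ← C_pow, C_mul_X_pow_eq_monomial, C_mul_X_pow_eq_monomial,
      monomial_mul]
  rw [linForm_two, (Commute.all _ _).add_pow', coeff_sum,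
    sum_eq_single_of_mem (m, n) (mem_antidiagonal.2 rfl)]
  all_goals simp only [hterm, nsmul_eq_mul, ← C_eq_coe_nat, C_mul_monomial, coeff_monomial,
    single_add_single_inj]
  · simp [mul_assoc]
  · rintro ⟨p, q⟩ - hpq
    simp_all

/-- Dividing by the binomial coefficient makes `catalecticant k (ℓ ^ (2 * k))` rank one. -/
noncomputable def catalecticant (k : ℕ) :
    MvPolynomial (Fin 2) ℂ →ₗ[ℂ] Matrix (Fin (k + 1)) (Fin (k + 1)) ℂ where
  toFun f := Matrix.of fun i j =>
    coeff (single 0 (i + j : ℕ) + single 1 (k - i + (k - j))) f / (2 * k).choose (i + j)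
  map_add' f g := by ext; simp [add_div]
  map_smul' c f := by ext; simp [mul_div_assoc]

theorem catalecticant_apply (k : ℕ) (f : MvPolynomial (Fin 2) ℂ) (i j : Fin (k + 1)) :
    catalecticant k f i j =
      coeff (single 0 (i + j : ℕ) + single 1 (k - i + (k - j))) f / (2 * k).choose (i + j) :=
  rfl

noncomputable def veronese (k : ℕ) (a : Fin 2 → ℂ) : Fin (k + 1) → ℂ :=
  fun i => a 0 ^ (i : ℕ) * a 1 ^ (k - i)

theorem catalecticant_linForm_pow (k : ℕ) (a : Fin 2 → ℂ) :
    catalecticant k (linForm a ^ (2 * k)) = Matrix.vecMulVec (veronese k a) (veronese k a) := by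
  ext i j
  have hdeg : 2 * k = (i + j : ℕ) + (k - i + (k - j)) := by omega
  have hchoose : ((2 * k).choose (i + j) : ℂ) ≠ 0 := by
    exact_mod_cast (Nat.choose_pos (by omega)).ne'
  rw [catalecticant_apply, Matrix.vecMulVec_apply, hdeg, coeff_linForm_pow, ← hdeg]
  field_simp
  simp only [veronese]
  ring

theorem rank_catalecticant_le {k r : ℕ} {f : MvPolynomial (Fin 2) ℂ} (a : Fin r → Fin 2 → ℂ)
    (c : Fin r → ℂ) (hf : f = ∑ t, c t • linForm (a t) ^ (2 * k)) :
    (catalecticant k f).rank ≤ r := by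
  have hfactor : catalecticant k f =
      Matrix.of (fun i t => c t * veronese k (a t) i) * Matrix.of (fun t => veronese k (a t)) := by
    ext i j
    simp [hf, catalecticant_linForm_pow, Matrix.mul_apply, Matrix.sum_apply, Matrix.vecMulVec_apply,
      mul_assoc]
  rw [hfactor]
  exact (Matrix.rank_mul_le_left _ _).trans (Matrix.rank_le_width _)

theorem coeff_xkyk_add_x2k (k m n : ℕ) :
    coeff (single 0 m + single 1 n) (X 0 ^ k * X 1 ^ k + X 0 ^ (2 * k) : MvPolynomial (Fin 2) ℂ) =
      (if m = k ∧ n = k then 1 else 0) + (if m = 2 * k ∧ n = 0 then 1 else 0) := by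
  have hx : (X 0 ^ (2 * k) : MvPolynomial (Fin 2) ℂ) =
      monomial (single 0 (2 * k) + single 1 0) 1 := by
    rw [single_zero, add_zero, X_pow_eq_monomial]
  rw [coeff_add, X_pow_eq_monomial, X_pow_eq_monomial, monomial_mul, one_mul, hx,
    coeff_monomial, coeff_monomial]
  simp only [single_add_single_inj, eq_comm]

theorem rank_catalecticant_xkyk_add_x2k (k : ℕ) :
    (catalecticant k (X 0 ^ k * X 1 ^ k + X 0 ^ (2 * k))).rank = k + 1 := by
  apply Matrix.rank_eq_of_antitriangular
  · intro i j hj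
    rw [Fin.lt_def, Fin.val_rev] at hj
    rw [catalecticant_apply, coeff_xkyk_add_x2k]
    rw [if_neg (by omega), if_neg (by omega), add_zero, zero_div]
  · intro i
    have hchoose : ((2 * k).choose k : ℂ) ≠ 0 := by
      exact_mod_cast (Nat.choose_pos (by omega)).ne'
    have hsum : (i + (k + 1 - (i + 1)) : ℕ) = k := by omega
    rw [catalecticant_apply, coeff_xkyk_add_x2k, Fin.val_rev, hsum, if_pos ⟨rfl, by omega⟩]
    split_ifs <;> norm_num [hchoose]

theorem IsPrimitiveRoot.sum_pow_pow {R : Type*} [CommRing R] [IsDomain R] {ζ : R} {k : ℕ}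
    (hζ : IsPrimitiveRoot ζ k) (m : ℕ) :
    ∑ j ∈ range k, (ζ ^ j) ^ m = if k ∣ m then (k : R) else 0 := by
  simp_rw [← pow_mul, mul_comm _ m, pow_mul]
  split_ifs with hdvd
  · simp [(hζ.pow_eq_one_iff_dvd m).2 hdvd]
  · refine eq_zero_of_ne_zero_of_mul_left_eq_zero
      (sub_ne_zero_of_ne fun h => hdvd ((hζ.pow_eq_one_iff_dvd m).1 h.symm)) ?_
    rw [mul_neg_geom_sum, ← pow_mul, mul_comm, pow_mul, hζ.pow_eq_one, one_pow, sub_self]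

theorem IsPrimitiveRoot.sum_mul_add_pow {R : Type*} [CommRing R] [IsDomain R] {ζ : R} {k : ℕ}
    (hζ : IsPrimitiveRoot ζ k) (x y : R) (d : ℕ) :
    ∑ j ∈ range k, (ζ ^ j * x + y) ^ d =
      k * ∑ m ∈ range (d + 1) with k ∣ m, x ^ m * y ^ (d - m) * d.choose m := by
  simp_rw [add_pow, mul_pow]
  rw [sum_comm, sum_filter, mul_sum]
  refine sum_congr rfl fun m _ => ?_
  rw [← sum_mul, ← sum_mul, ← sum_mul, hζ.sum_pow_pow]
  split_ifs <;> ring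

theorem IsPrimitiveRoot.sum_mul_add_pow_two_mul {R : Type*} [CommRing R] [IsDomain R] {ζ : R}
    {k : ℕ} (hζ : IsPrimitiveRoot ζ k) (hk : k ≠ 0) (x y : R) :
    ∑ j ∈ range k, (ζ ^ j * x + y) ^ (2 * k) =
      k * (y ^ (2 * k) + (2 * k).choose k * x ^ k * y ^ k + x ^ (2 * k)) := by
  have hmultiples : {m ∈ range (2 * k + 1) | k ∣ m} = {0, k, 2 * k} := by
    ext m
    simp only [mem_filter, mem_range, mem_insert, mem_singleton]
    constructor
    · rintro ⟨hm, t, rfl⟩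
      have : t < 3 := by nlinarith [Nat.pos_of_ne_zero hk]
      interval_cases t <;> simp [mul_comm]
    · rintro (rfl | rfl | rfl) <;> exact ⟨by omega, by simp⟩
  rw [hζ.sum_mul_add_pow, hmultiples, sum_insert (by simp; omega), sum_insert (by simp; omega),
    sum_singleton, show 2 * k - k = k by omega]
  simp only [Nat.sub_zero, Nat.sub_self, pow_zero, Nat.choose_zero_right, Nat.choose_self,
    Nat.cast_one]
  ring

theorem xkyk_add_x2k_eq_sum_pow {k : ℕ} (hk : k ≠ 0) {ζ ω : ℂ} (hζ : IsPrimitiveRoot ζ k)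
    (hω : ω ^ k = ((2 * k).choose k : ℂ)) :
    (X 0 ^ k * X 1 ^ k + X 0 ^ (2 * k) : MvPolynomial (Fin 2) ℂ) =
      ∑ j ∈ range k,
          ((k : ℂ) * ((2 * k).choose k : ℂ) ^ 2)⁻¹ • linForm ![ω * ζ ^ j, 1] ^ (2 * k) +
        (-(((2 * k).choose k : ℂ) ^ 2)⁻¹) • linForm ![0, 1] ^ (2 * k) := by
  set c : ℂ := ((2 * k).choose k : ℂ)
  have hc : c ≠ 0 := Nat.cast_ne_zero.2 (Nat.choose_pos (by omega)).ne'
  have hkc : (k : ℂ) ≠ 0 := by exact_mod_cast hk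
  have hL : ∀ j, linForm ![ω * ζ ^ j, 1] = C ζ ^ j * (C ω * X 0) + X 1 := by
    intro j
    simp only [linForm_two, Matrix.cons_val_zero, Matrix.cons_val_one, map_mul, map_pow, map_one,
      one_mul]
    ring
  have hsum := (hζ.map_of_injective (C_injective (Fin 2) ℂ)).sum_mul_add_pow_two_mul hk
    (C ω * X 0) (X 1)
  have hpow : (C ω * X 0 : MvPolynomial (Fin 2) ℂ) ^ k = C c * X 0 ^ k := by
    rw [mul_pow, ← C_pow, hω]
  have hpow2 : (C ω * X 0 : MvPolynomial (Fin 2) ℂ) ^ (2 * k) = C c ^ 2 * X 0 ^ (2 * k) := by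
    rw [mul_comm 2 k, pow_mul, hpow, mul_pow, ← pow_mul]
  have hnorm : C ((k : ℂ) * c ^ 2)⁻¹ * (C (k : ℂ) * C c ^ 2) =
      (1 : MvPolynomial (Fin 2) ℂ) := by
    rw [← C_pow, ← map_mul, ← map_mul, inv_mul_cancel₀ (mul_ne_zero hkc (pow_ne_zero 2 hc)),
      map_one]
  have hcancel : C ((k : ℂ) * c ^ 2)⁻¹ * C (k : ℂ) + C (-(c ^ 2)⁻¹) =
      (0 : MvPolynomial (Fin 2) ℂ) := by
    rw [← map_mul, ← map_add, ← map_zero C]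
    congr 1
    field_simp
    ring
  have hX1 : linForm ![0, 1] = X 1 := by simp [linForm_two]
  simp_rw [← smul_sum, hL, hsum, hpow, hpow2, hX1, smul_eq_C_mul,
    ← map_natCast (C : ℂ →+* MvPolynomial (Fin 2) ℂ)]
  linear_combination (-(X 0 ^ k * X 1 ^ k + X 0 ^ (2 * k))) * hnorm - X 1 ^ (2 * k) * hcancel

theorem exists_xkyk_add_x2k_eq_sum_pow {k : ℕ} (hk : k ≠ 0) :
    ∃ (a : Fin (k + 1) → Fin 2 → ℂ) (c : Fin (k + 1) → ℂ),
      (X 0 ^ k * X 1 ^ k + X 0 ^ (2 * k) : MvPolynomial (Fin 2) ℂ) =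
        ∑ i, c i • linForm (a i) ^ (2 * k) := by
  obtain ⟨ω, hω⟩ :=
    IsAlgClosed.exists_pow_nat_eq ((2 * k).choose k : ℂ) (Nat.pos_of_ne_zero hk)
  set ζ := Complex.exp (2 * Real.pi * Complex.I / k)
  set c : ℂ := ((2 * k).choose k : ℂ)
  refine ⟨Fin.snoc (fun j : Fin k => ![ω * ζ ^ (j : ℕ), 1]) ![0, 1],
    Fin.snoc (fun _ => ((k : ℂ) * c ^ 2)⁻¹) (-(c ^ 2)⁻¹), ?_⟩
  rw [Fin.sum_univ_castSucc]
  simp only [Fin.snoc_castSucc, Fin.snoc_last]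
  rw [Fin.sum_univ_eq_sum_range (fun j => _ • linForm ![_ * _ ^ j, 1] ^ (2 * k))]
  exact xkyk_add_x2k_eq_sum_pow hk (Complex.isPrimitiveRoot_exp k hk) hω

/-- For `k ≥ 2`, the Waring rank of `x^k y^k + x^{2k}` equals `k + 1`. -/
theorem stmt6 (k : ℕ) (hk : 2 ≤ k) :
    waringRank (2 * k) ((X 0) ^ k * (X 1) ^ k + (X 0) ^ (2 * k) : MvPolynomial (Fin 2) ℂ) =
      k + 1 := by
  obtain ⟨a, c, hf⟩ := exists_xkyk_add_x2k_eq_sum_pow (by omega : k ≠ 0)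
  refine le_antisymm (Nat.sInf_le ⟨a, c, hf⟩) (le_csInf ⟨k + 1, a, c, hf⟩ ?_)
  rintro r ⟨a', c', hf'⟩
  rw [← rank_catalecticant_xkyk_add_x2k k]
  exact rank_catalecticant_le a' c' hf'
end

section
/- The binary monomial g = x^k y^k (k ≥ 1) admits an irredundant Waring decomposition of length k+2. -/
open MvPolynomial

theorem LinearIndependent.mem_of_sum_eq_sum_subset {ι R M : Type*} [Fintype ι] [Ring R]
    [AddCommGroup M] [Module R M] {v : ι → M} (hv : LinearIndependent R v) {c c' : ι → R}
    {S : Finset ι} (h : ∑ i, c i • v i = ∑ i ∈ S, c' i • v i) {i : ι} (hi : c i ≠ 0) :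
    i ∈ S := by
  classical
  by_contra hiS
  have := hv.eq_coords_of_eq (f := c) (g := fun j => if j ∈ S then c' j else 0)
    (by simp only [h, ite_smul, zero_smul, Finset.sum_ite_mem, Finset.univ_inter]) i
  simp only [hiS, if_false] at this
  exact hi this

theorem IsPrimitiveRoot.sum_fin_pow_pow {K : Type*} [Field K] {ω : K} {n : ℕ}
    (hω : IsPrimitiveRoot ω n) (t : ℕ) :
    ∑ i : Fin n, (ω ^ t) ^ (i : ℕ) = if n ∣ t then (n : K) else 0 := by
  rw [Fin.sum_univ_eq_sum_range (fun i => (ω ^ t) ^ i)]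
  split_ifs with hnt
  · simp [(hω.pow_eq_one_iff_dvd t).mpr hnt]
  · rw [geom_sum_eq (mt (hω.pow_eq_one_iff_dvd t).mp hnt), ← pow_mul, mul_comm, pow_mul,
      hω.pow_eq_one, one_pow, sub_self, zero_div]

theorem IsPrimitiveRoot.sum_smul_add_smul_pow {K A : Type*} [Field K] [CommRing A] [Algebra K A]
    {ω : K} {n k : ℕ} (hω : IsPrimitiveRoot ω n) (hkn : k < n) (x y : A) :
    ∑ i : Fin n, (ω ^ (i : ℕ)) ^ (n - k) • (x + ω ^ (i : ℕ) • y) ^ (2 * k)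
      = ((n : K) * (2 * k).choose k) • (x ^ k * y ^ k) := by
  have hdvd : ∀ m ∈ Finset.range (2 * k + 1), n ∣ n + k - m ↔ m = k := by
    intro m hm
    rw [Finset.mem_range] at hm
    constructor
    · rintro ⟨q, hq⟩
      rcases q with _ | _ | q
      · omega
      · omega
      · have := Nat.mul_le_mul_left n (show 2 ≤ q + 1 + 1 by omega)
        omega
    · rintro rfl
      simp
  calc ∑ i : Fin n, (ω ^ (i : ℕ)) ^ (n - k) • (x + ω ^ (i : ℕ) • y) ^ (2 * k)
      = ∑ m ∈ Finset.range (2 * k + 1),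
          (∑ i : Fin n, (ω ^ (n + k - m)) ^ (i : ℕ)) •
            (x ^ m * y ^ (2 * k - m) * ((2 * k).choose m : A)) := by
        simp_rw [add_pow, Finset.smul_sum, Finset.sum_smul]
        rw [Finset.sum_comm]
        refine Finset.sum_congr rfl fun m hm => Finset.sum_congr rfl fun i _ => ?_
        have hexp : n + k - m = n - k + (2 * k - m) := by rw [Finset.mem_range] at hm; omega
        rw [smul_pow, mul_smul_comm, smul_mul_assoc, smul_smul, ← pow_add, ← pow_mul, mul_comm,
          pow_mul, hexp]
    _ = ((n : K) * (2 * k).choose k) • (x ^ k * y ^ k) := by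
        simp_rw [hω.sum_fin_pow_pow]
        rw [Finset.sum_eq_single_of_mem k (Finset.mem_range.mpr (by omega))]
        · rw [if_pos (by simp), show 2 * k - k = k by omega, mul_smul]
          simp only [Nat.cast_smul_eq_nsmul, nsmul_eq_mul]
          ring
        · intro m hm hmk
          rw [if_neg (mt (hdvd m hm).mp hmk), zero_smul]

theorem Polynomial.linearIndependent_X_add_C_pow {K : Type*} [Field K] [CharZero K] {n d : ℕ}
    (hnd : n ≤ d + 1) {b : Fin n → K} (hb : Function.Injective b) :
    LinearIndependent K fun i => (X + C (b i)) ^ d := by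
  rw [Fintype.linearIndependent_iff]
  intro g hg
  have hmoment : ∀ j : Fin n, ∑ i, g i * b i ^ (j : ℕ) = 0 := by
    intro j
    have hj : d - (d - j) = j := by omega
    have := congrArg (fun p => p.coeff (d - j)) hg
    simp only [Polynomial.finsetSum_coeff, Polynomial.coeff_smul, coeff_X_add_C_pow, hj,
      smul_eq_mul, Polynomial.coeff_zero, ← mul_assoc, ← Finset.sum_mul] at this
    exact (mul_eq_zero.mp this).resolve_right (Nat.cast_ne_zero.mpr (Nat.choose_pos (by omega)).ne')
  exact congrFun (Matrix.eq_zero_of_forall_pow_sum_mul_pow_eq_zero hb hmoment)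

theorem MvPolynomial.linearIndependent_X_add_smul_X_pow {K : Type*} [Field K] [CharZero K]
    {n d : ℕ} (hnd : n ≤ d + 1) {b : Fin n → K} (hb : Function.Injective b) :
    LinearIndependent K fun i => (X 0 + b i • X 1 : MvPolynomial (Fin 2) K) ^ d := by
  refine LinearIndependent.of_comp (aeval ![(Polynomial.X : Polynomial K), 1]).toLinearMap ?_
  have himage : (aeval ![(Polynomial.X : Polynomial K), 1]).toLinearMap ∘
      (fun i => (X 0 + b i • X 1 : MvPolynomial (Fin 2) K) ^ d) =
      fun i => (Polynomial.X + Polynomial.C (b i)) ^ d := by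
    ext1 i
    simp [Polynomial.smul_eq_C_mul]
  rw [himage]
  exact Polynomial.linearIndependent_X_add_C_pow hnd hb

theorem linForm_fin_two (a b : ℂ) : linForm ![a, b] = a • X 0 + b • X 1 := by
  simp [linForm, Fin.sum_univ_two, smul_eq_C_mul]

/-- The binary monomial `x^k y^k` (`k ≥ 1`) admits an irredundant Waring decomposition
of length `k + 2`. -/
theorem stmt8 (k : ℕ) (hk : 1 ≤ k) :
    ∃ (a : Fin (k+2) → Fin 2 → ℂ) (c : Fin (k+2) → ℂ),
      (∀ i j, i ≠ j → ∀ t : ℂ, a i ≠ t • a j) ∧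
      ((X 0) ^ k * (X 1) ^ k : MvPolynomial (Fin 2) ℂ) =
        ∑ i, c i • (linForm (a i)) ^ (2 * k) ∧
      ∀ S : Finset (Fin (k+2)), S ≠ Finset.univ →
        ¬ ∃ c' : Fin (k+2) → ℂ,
          ((X 0) ^ k * (X 1) ^ k : MvPolynomial (Fin 2) ℂ) =
            ∑ i ∈ S, c' i • (linForm (a i)) ^ (2 * k) := by
  obtain ⟨ω, hω⟩ : ∃ ω : ℂ, IsPrimitiveRoot ω (k + 2) :=
    ⟨_, Complex.isPrimitiveRoot_exp _ (by omega)⟩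
  have hinj : Function.Injective fun i : Fin (k + 2) => ω ^ (i : ℕ) :=
    fun i j h => Fin.ext (hω.pow_inj i.isLt j.isLt h)
  have hforms (i : Fin (k + 2)) : linForm ![1, ω ^ (i : ℕ)] = X 0 + ω ^ (i : ℕ) • X 1 := by
    rw [linForm_fin_two, one_smul]
  set D : ℂ := (k + 2 : ℕ) * (2 * k).choose k
  have hD : D ≠ 0 :=
    mul_ne_zero (Nat.cast_ne_zero.mpr (by omega)) (Nat.cast_ne_zero.mpr (Nat.choose_pos (by omega)).ne')
  set c : Fin (k + 2) → ℂ := fun i => (ω ^ (i : ℕ)) ^ (k + 2 - k) / D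
  have hc (i : Fin (k + 2)) : c i ≠ 0 :=
    div_ne_zero (pow_ne_zero _ (pow_ne_zero _ (hω.ne_zero (by omega)))) hD
  have hdecomp : (X 0 ^ k * X 1 ^ k : MvPolynomial (Fin 2) ℂ) =
      ∑ i, c i • (X 0 + ω ^ (i : ℕ) • X 1) ^ (2 * k) := by
    simp_rw [c, div_eq_inv_mul, mul_smul, ← Finset.smul_sum]
    rw [hω.sum_smul_add_smul_pow (k := k) (by omega), smul_smul, inv_mul_cancel₀ hD, one_smul]
  have hindep := linearIndependent_X_add_smul_X_pow (by omega : k + 2 ≤ 2 * k + 1) hinj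
  refine ⟨fun i => ![1, ω ^ (i : ℕ)], c, ?_, ?_, ?_⟩
  · intro i j hij t h
    have h0 := congrFun h 0
    have h1 := congrFun h 1
    simp only [Matrix.cons_val_zero, Matrix.cons_val_one, Matrix.cons_val_fin_one, Pi.smul_apply,
      smul_eq_mul, mul_one] at h0 h1
    rw [← h0, one_mul] at h1
    exact hij (hinj h1)
  · simpa only [hforms] using hdecomp
  · rintro S hS ⟨c', hc'⟩
    simp only [hforms] at hc'
    exact hS (Finset.eq_univ_of_forall fun i =>
      hindep.mem_of_sum_eq_sum_subset (hdecomp.symm.trans hc') (hc i))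
end

section
/- Let k, n ≥ 1, let g = (x_0⋯x_n)^k, and let ℓ = a_0 x_0 + ⋯ + a_n x_n with all a_i ≠ 0. Define J ⊆ ℂ[X_0,…,X_n] to be the ideal generated by the hyperplane J_{k+1} = {F ∈ span(X_0^{k+1},…,X_n^{k+1}) : F(a_0,…,a_n) = 0}. Then J is a complete intersection ideal of the form (X_0^{k+1} − α_1 X_1^{k+1}, …, X_0^{k+1} − α_n X_n^{k+1}) with all α_i ≠ 0, and its zero set in ℙ^n consists of exactly (k+1)^n points containing the point [ℓ] = (a_0 : ⋯ : a_n). -/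
/-!
Put `m = k + 1`. A form `Σ c_j X_j ^ m` vanishes at `a` iff `Σ c_j a_j ^ m = 0`, and the
projection `F ↦ F - (F(a) / a_0 ^ m) X_0 ^ m` onto this hyperplane sends each `X_j ^ m` to a
multiple of the binomial `X_0 ^ m - α_j X_j ^ m`, `α_j = (a_0 / a_j) ^ m`; so these binomials
span the hyperplane. At a common zero `x_0 ≠ 0`, and normalising `x_0 = 1` a zero amounts to
choosing an `m`-th root of `α_j⁻¹` for every `j`, which can be done in `m ^ n` ways.
-/

open Polynomial in
theorem IsAlgClosed.card_pow_eq {K : Type*} [Field K] [IsAlgClosed K] {m : ℕ}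
    (hm : (m : K) ≠ 0) {β : K} (hβ : β ≠ 0) : Nat.card {z : K // z ^ m = β} = m := by
  have hm0 : m ≠ 0 := by rintro rfl; exact hm Nat.cast_zero
  have hne : (X ^ m - C β : K[X]) ≠ 0 := X_pow_sub_C_ne_zero (Nat.pos_of_ne_zero hm0) β
  have hroots : {z : K // z ^ m = β} ≃ (X ^ m - C β : K[X]).rootSet K :=
    Equiv.subtypeEquivRight fun z => by simp [mem_rootSet, hne, sub_eq_zero]
  rw [Nat.card_congr hroots, Nat.card_eq_fintype_card,
    card_rootSet_eq_natDegree (separable_X_pow_sub_C β hm hβ) (IsAlgClosed.splits _),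
    natDegree_X_pow_sub_C]

theorem LinearMap.ker_inf_span_range_fin_succ {K V : Type*} [Field K] [AddCommGroup V]
    [Module K V] {n : ℕ} (φ : V →ₗ[K] K) (v : Fin (n + 1) → V)
    (hv : ∀ j, φ (v j) ≠ 0) :
    LinearMap.ker φ ⊓ Submodule.span K (Set.range v) =
      Submodule.span K
        (Set.range fun i : Fin n => v 0 - (φ (v 0) / φ (v i.succ)) • v i.succ) := by
  set W := Submodule.span K
    (Set.range fun i : Fin n => v 0 - (φ (v 0) / φ (v i.succ)) • v i.succ)
  set P : V →ₗ[K] V := LinearMap.id - (φ (v 0))⁻¹ • φ.smulRight (v 0)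
  have hP : ∀ w, P w = w - (φ w / φ (v 0)) • v 0 := fun w => by
    simp [P, div_eq_inv_mul, mul_smul]
  apply le_antisymm
  · rintro w ⟨hw, hwv⟩
    have hvW : Submodule.span K (Set.range v) ≤ W.comap P := by
      rw [Submodule.span_le]
      rintro _ ⟨j, rfl⟩
      cases j using Fin.cases with
      | zero => simp [hP, div_self (hv 0)]
      | succ i =>
        have hPv : P (v i.succ) = -(φ (v i.succ) / φ (v 0)) •
            (v 0 - (φ (v 0) / φ (v i.succ)) • v i.succ) := by
          rw [hP, smul_sub, smul_smul,
            show -(φ (v i.succ) / φ (v 0)) * (φ (v 0) / φ (v i.succ)) = -1 by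
              field_simp [hv 0, hv i.succ]]
          simp only [neg_smul, one_smul, sub_neg_eq_add, neg_add_eq_sub]
        exact Submodule.mem_comap.2 (hPv ▸ W.smul_mem _ (Submodule.subset_span ⟨i, rfl⟩))
    simpa [hP, LinearMap.mem_ker.1 hw] using hvW hwv
  · rw [Submodule.span_le]
    rintro _ ⟨i, rfl⟩
    refine ⟨?_, ?_⟩
    · simp [div_mul_cancel₀ _ (hv i.succ)]
    · exact Submodule.sub_mem _ (Submodule.subset_span ⟨0, rfl⟩)
        (Submodule.smul_mem _ _ (Submodule.subset_span ⟨i.succ, rfl⟩))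

namespace Projectivization

variable {K : Type*} [Field K] {n : ℕ}

def affinePoint (z : Fin n → K) : Projectivization K (Fin (n + 1) → K) :=
  mk K (Fin.cons 1 z) fun h => one_ne_zero (congrFun h 0)

theorem affinePoint_injective : Function.Injective (affinePoint (K := K) (n := n)) := by
  intro z w h
  obtain ⟨u, hu⟩ := (mk_eq_mk_iff' K _ _ _ _).1 h
  have hu1 : u = 1 := by simpa using congrFun hu 0
  funext i
  simpa [hu1] using (congrFun hu i.succ).symm

end Projectivization

open MvPolynomial

namespace MvPolynomial

variable {K : Type*} [Field K] {n : ℕ}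

noncomputable def binomialIdeal (m : ℕ) (α : Fin n → K) :
    Ideal (MvPolynomial (Fin (n + 1)) K) :=
  Ideal.span (Set.range fun i => X 0 ^ m - C (α i) * X i.succ ^ m)

/-- Read on the chosen representative, so only meaningful for homogeneous `J`. -/
def projZeroLocus {σ : Type*} (J : Ideal (MvPolynomial σ K)) :
    Set (Projectivization K (σ → K)) :=
  {p | ∀ F ∈ J, eval p.rep F = 0}

theorem ideal_span_vanishing_powers_eq_binomialIdeal (m : ℕ) (a : Fin (n + 1) → K)
    (ha : ∀ j, a j ≠ 0) :
    Ideal.span {F : MvPolynomial (Fin (n + 1)) K |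
        F ∈ Submodule.span K (Set.range fun j => (X j : MvPolynomial (Fin (n + 1)) K) ^ m) ∧
        eval a F = 0} =
      binomialIdeal m fun i => a 0 ^ m / a i.succ ^ m := by
  have hset : {F : MvPolynomial (Fin (n + 1)) K |
        F ∈ Submodule.span K (Set.range fun j => (X j : MvPolynomial (Fin (n + 1)) K) ^ m) ∧
        eval a F = 0} =
      ↑(LinearMap.ker (aeval a).toLinearMap ⊓
        Submodule.span K (Set.range fun j => (X j : MvPolynomial (Fin (n + 1)) K) ^ m)) := by
    ext F
    simp [and_comm]
  rw [hset, LinearMap.ker_inf_span_range_fin_succ _ _ fun j => by simpa using pow_ne_zero m (ha j),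
    Ideal.span, Submodule.span_span_of_tower]
  simp [binomialIdeal, smul_eq_C_mul]

theorem forall_mem_ideal_span_eval_eq_zero_iff {σ R : Type*} [CommRing R] (x : σ → R)
    (S : Set (MvPolynomial σ R)) :
    (∀ F ∈ Ideal.span S, eval x F = 0) ↔ ∀ F ∈ S, eval x F = 0 := by
  simpa [SetLike.le_def, Set.subset_def] using Ideal.span_le (I := RingHom.ker (eval x)) (s := S)

variable {m : ℕ} {α : Fin n → K}

theorem mk_mem_projZeroLocus_binomialIdeal_iff (v : Fin (n + 1) → K) (hv : v ≠ 0) :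
    Projectivization.mk K v hv ∈ projZeroLocus (binomialIdeal m α) ↔
      ∀ i, v 0 ^ m = α i * v i.succ ^ m := by
  obtain ⟨u, hu⟩ := Projectivization.exists_smul_eq_mk_rep K v hv
  simp [projZeroLocus, binomialIdeal, forall_mem_ideal_span_eval_eq_zero_iff, ← hu,
    Units.smul_def, mul_pow, sub_eq_zero, mul_left_comm (α _)]

theorem projZeroLocus_binomialIdeal_eq_range (hm : m ≠ 0) (hα : ∀ i, α i ≠ 0) :
    projZeroLocus (binomialIdeal m α) =
      Set.range fun z : ∀ i, {z : K // z ^ m = (α i)⁻¹} =>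
        Projectivization.affinePoint fun i => (z i : K) := by
  ext p
  constructor
  · intro hp
    rw [← p.mk_rep, mk_mem_projZeroLocus_binomialIdeal_iff] at hp
    set v := p.rep
    have hv0 : v 0 ≠ 0 := by
      intro h0
      refine p.rep_nonzero ?_
      funext j
      cases j using Fin.cases with
      | zero => exact h0
      | succ i => simpa [h0, hm, hα i] using (hp i).symm
    have hvs : ∀ i : Fin n, v i.succ ≠ 0 := fun i hi => hv0 (by simpa [hi, hm] using hp i)
    refine ⟨fun i => ⟨v i.succ / v 0, ?_⟩, ?_⟩
    · rw [div_pow, hp i]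
      field_simp [hvs i, hα i]
    · rw [← p.mk_rep]
      refine (Projectivization.mk_eq_mk_iff' K _ _ _ _).2 ⟨(v 0)⁻¹, ?_⟩
      funext j
      cases j using Fin.cases with
      | zero => exact inv_mul_cancel₀ hv0
      | succ i => simp [v, div_eq_inv_mul]
  · rintro ⟨z, rfl⟩
    unfold Projectivization.affinePoint
    rw [mk_mem_projZeroLocus_binomialIdeal_iff]
    intro i
    simp [(z i).2, hα i]

end MvPolynomial

/-- The ideal `J` generated by the hyperplane of `span(X_0^{k+1},…,X_n^{k+1})`
consisting of forms vanishing at the coefficient vector of `ℓ = Σ aᵢxᵢ` (all `aᵢ ≠ 0`)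
is a complete intersection `(X_0^{k+1} − α_1 X_1^{k+1}, …, X_0^{k+1} − α_n X_n^{k+1})`
with all `αᵢ ≠ 0`, and its zero set in `ℙⁿ` consists of exactly `(k+1)ⁿ` points and
contains the point `[ℓ]`. -/
theorem stmt10 (n k : ℕ)
    (a : Fin (n+1) → ℂ) (ha : ∀ i, a i ≠ 0)
    (J : Ideal (MvPolynomial (Fin (n+1)) ℂ))
    (hJ : J = Ideal.span {F : MvPolynomial (Fin (n+1)) ℂ |
      F ∈ Submodule.span ℂ (Set.range fun i : Fin (n+1) => (X i : MvPolynomial (Fin (n+1)) ℂ) ^ (k+1)) ∧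
      eval a F = 0}) :
    (∃ α : Fin n → ℂ, (∀ i, α i ≠ 0) ∧
      J = Ideal.span (Set.range fun i : Fin n =>
        (X 0 : MvPolynomial (Fin (n+1)) ℂ) ^ (k+1) - C (α i) * (X i.succ) ^ (k+1))) ∧
    {p : Projectivization ℂ (Fin (n+1) → ℂ) |
        ∀ F ∈ J, eval (Projectivization.rep p) F = 0}.ncard = (k+1) ^ n ∧
    Projectivization.mk ℂ a (by intro h; exact ha 0 (congrFun h 0)) ∈
      {p : Projectivization ℂ (Fin (n+1) → ℂ) |
        ∀ F ∈ J, eval (Projectivization.rep p) F = 0} := by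
  set α : Fin n → ℂ := fun i => a 0 ^ (k + 1) / a i.succ ^ (k + 1)
  have hα : ∀ i, α i ≠ 0 := fun i =>
    div_ne_zero (pow_ne_zero _ (ha 0)) (pow_ne_zero _ (ha i.succ))
  rw [ideal_span_vanishing_powers_eq_binomialIdeal (k + 1) a ha] at hJ
  subst hJ
  refine ⟨⟨α, hα, rfl⟩, ?_, ?_⟩
  · change (projZeroLocus (binomialIdeal (k + 1) α)).ncard = _
    rw [projZeroLocus_binomialIdeal_eq_range k.add_one_ne_zero hα, Set.ncard_range_of_injective,
      Nat.card_pi, Finset.prod_congr rfl fun i _ =>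
        IsAlgClosed.card_pow_eq (Nat.cast_ne_zero.2 k.add_one_ne_zero) (inv_ne_zero (hα i))]
    · simp
    · exact Projectivization.affinePoint_injective.comp fun z w h =>
        funext fun i => Subtype.ext (congrFun h i)
  · exact (mk_mem_projZeroLocus_binomialIdeal_iff a _).2 fun i =>
      (div_mul_cancel₀ _ (pow_ne_zero _ (ha i.succ))).symm
end

section
/- Let f = xyz + λℓ³ with ℓ = ax + by + cz, λ ≠ 0, and abc = 0 (at least one coefficient zero). Then the Waring rank of f over ℂ equals 4. -/
open MvPolynomial

open scoped Matrix

/-! Let `k` index a vanishing coefficient of `ℓ`. Then `∂ₖ² f = 0`, as `∂ₖ²(xyz) = 0`, while the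
three partials of `f` are always linearly independent. In a decomposition `f = ∑ᵢ cᵢ ℓᵢ³` into
three cubes, either the `ℓᵢ` are dependent, and the derivative along a common zero `u` of the `ℓᵢ`
kills `f`, or they form a basis, and `∂ₖ² f = 6 ∑ᵢ cᵢ ℓᵢₖ² ℓᵢ = 0` forces every `cᵢ ℓᵢₖ` to
vanish, so that `∂ₖ f = 0`. Either way the partials of `f` are dependent, hence `R(f) ≥ 4`.

Conversely, after permuting and rescaling the variables (and taking a cube root of `λ`), `f`
becomes `xyz`, `xyz + x³` or `xyz + (x + y)³`, each of which is a sum of four cubes. -/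

section LinForm

variable {n : ℕ}

theorem eval_linForm (a x : Fin n → ℂ) : eval x (linForm a) = a ⬝ᵥ x := by
  simp [linForm, dotProduct]

theorem linForm_single (i : Fin n) : linForm (Pi.single i 1) = X i := by
  simp [linForm, Pi.single_apply]

theorem linForm_injective : Function.Injective (linForm (n := n)) := by
  intro a b h
  ext j
  simpa [eval_linForm] using congrArg (eval (Pi.single j 1)) h

theorem sum_smul_linForm {r : ℕ} (w : Fin r → ℂ) (A : Fin r → Fin n → ℂ) :
    ∑ i, w i • linForm (A i) = linForm (w ᵥ* A) := by
  simp only [linForm, Matrix.vecMul, dotProduct, Finset.smul_sum, smul_eq_C_mul, map_sum, map_mul,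
    Finset.sum_mul, ← mul_assoc]
  exact Finset.sum_comm

theorem aeval_linForm {m : ℕ} (M : Fin n → Fin m → ℂ) (a : Fin n → ℂ) :
    aeval (fun j => linForm (M j)) (linForm a) = linForm (a ᵥ* M) := by
  rw [← sum_smul_linForm, linForm]
  simp [smul_eq_C_mul]

theorem pderiv_linForm (a : Fin n → ℂ) (j : Fin n) : pderiv j (linForm a) = C (a j) := by
  simp [linForm, pderiv_X, Pi.single_apply]

theorem pderiv_linForm_pow (a : Fin n → ℂ) (j : Fin n) (m : ℕ) :
    pderiv j (linForm a ^ m) = (m * a j) • linForm a ^ (m - 1) := by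
  rw [pderiv_pow, pderiv_linForm, smul_eq_C_mul]
  simp only [map_mul, map_natCast]
  ring

end LinForm

def HasWaringDecomposition {n : ℕ} (d r : ℕ) (f : MvPolynomial (Fin n) ℂ) : Prop :=
  ∃ (a : Fin r → Fin n → ℂ) (c : Fin r → ℂ), f = ∑ i, c i • (linForm (a i)) ^ d

namespace HasWaringDecomposition

variable {n : ℕ} {d r : ℕ} {f : MvPolynomial (Fin n) ℂ}

theorem succ (h : HasWaringDecomposition d r f) : HasWaringDecomposition d (r + 1) f := by
  obtain ⟨a, c, rfl⟩ := h
  exact ⟨Fin.snoc a 0, Fin.snoc c 0, by simp [Fin.sum_univ_castSucc]⟩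

theorem mono {s : ℕ} (h : HasWaringDecomposition d r f) (hrs : r ≤ s) :
    HasWaringDecomposition d s f := by
  induction s, hrs using Nat.le_induction with
  | base => exact h
  | succ s _ ih => exact ih.succ

theorem aeval {m : ℕ} (h : HasWaringDecomposition d r f) (M : Fin n → Fin m → ℂ) :
    HasWaringDecomposition d r (aeval (fun j => linForm (M j)) f) := by
  obtain ⟨a, c, rfl⟩ := h
  exact ⟨fun i => a i ᵥ* M, c, by simp only [map_sum, map_smul, map_pow, aeval_linForm]⟩

theorem rename {m : ℕ} (h : HasWaringDecomposition d r f) (σ : Fin n → Fin m) :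
    HasWaringDecomposition d r (rename σ f) := by
  simpa [rename_eq_aeval, Function.comp_def, linForm_single] using
    h.aeval fun j => Pi.single (σ j) 1

end HasWaringDecomposition

theorem waringRank_eq_succ {n d r : ℕ} {f : MvPolynomial (Fin n) ℂ}
    (h : HasWaringDecomposition d (r + 1) f) (h' : ¬ HasWaringDecomposition d r f) :
    waringRank d f = r + 1 := by
  refine le_antisymm (Nat.sInf_le h) (le_csInf ⟨_, h⟩ fun s hs => ?_)
  by_contra! hlt
  exact h' (HasWaringDecomposition.mono hs (Nat.lt_succ_iff.mp hlt))

section LowerBound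

variable {n r : ℕ}

theorem sum_smul_pderiv_sum_cube (A : Fin r → Fin n → ℂ) (c : Fin r → ℂ) (u : Fin n → ℂ) :
    ∑ j, u j • pderiv j (∑ i, c i • linForm (A i) ^ 3) =
      ∑ i, (3 * c i * (A *ᵥ u) i) • linForm (A i) ^ 2 := by
  simp only [map_sum, Derivation.map_smul, pderiv_linForm_pow, smul_smul, Finset.smul_sum]
  rw [Finset.sum_comm]
  refine Finset.sum_congr rfl fun i _ => ?_
  simp only [Matrix.mulVec, dotProduct, Finset.mul_sum, ← Finset.sum_smul]
  congr 1
  refine Finset.sum_congr rfl fun j _ => ?_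
  push_cast
  ring

theorem pderiv_pderiv_sum_cube (A : Fin r → Fin n → ℂ) (c : Fin r → ℂ) (k : Fin n) :
    pderiv k (pderiv k (∑ i, c i • linForm (A i) ^ 3)) =
      ∑ i, (6 * c i * A i k ^ 2) • linForm (A i) := by
  simp only [map_sum, Derivation.map_smul, pderiv_linForm_pow, smul_smul]
  refine Finset.sum_congr rfl fun i _ => ?_
  norm_num
  congr 1
  ring

theorem not_hasWaringDecomposition_of_linearIndependent_pderiv {f : MvPolynomial (Fin n) ℂ}
    (hf : LinearIndependent ℂ fun j => pderiv j f) {k : Fin n}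
    (hk : pderiv k (pderiv k f) = 0) : ¬ HasWaringDecomposition 3 n f := by
  rintro ⟨A, c, rfl⟩
  obtain ⟨u, hu0, hu⟩ : ∃ u ≠ 0, ∀ i, c i * (A *ᵥ u) i = 0 := by
    by_cases hA : Matrix.det A = 0
    · obtain ⟨u, hu0, hAu⟩ := Matrix.exists_mulVec_eq_zero_iff.mpr hA
      exact ⟨u, hu0, fun i => by simp [hAu]⟩
    · have hw : (fun i => 6 * c i * A i k ^ 2) ᵥ* A = 0 := by
        apply linForm_injective
        rw [← sum_smul_linForm, ← pderiv_pderiv_sum_cube, hk]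
        simp [linForm]
      have hw0 : (fun i => 6 * c i * A i k ^ 2) = 0 := by
        by_contra hne
        exact hA (Matrix.exists_vecMul_eq_zero_iff.mp ⟨_, hne, hw⟩)
      refine ⟨Pi.single k 1, by simp, fun i => ?_⟩
      have hi : 6 * c i * A i k ^ 2 = 0 := congrFun hw0 i
      simp [Matrix.mulVec, dotProduct, Pi.single_apply] at hi ⊢
      tauto
  apply hu0
  funext j
  refine Fintype.linearIndependent_iff.mp hf u ?_ j
  rw [sum_smul_pderiv_sum_cube]
  exact Finset.sum_eq_zero fun i _ => by rw [mul_assoc, hu, mul_zero, zero_smul]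

end LowerBound

theorem linearIndependent_pderiv_prod_X_add_C_mul_linForm_pow (lam : ℂ) (v : Fin 3 → ℂ) :
    LinearIndependent ℂ fun j => pderiv j (∏ i, X i + C lam * linForm v ^ 3) := by
  rw [Fintype.linearIndependent_iff]
  intro u hu
  have hev (x : Fin 3 → ℂ) := congrArg (eval x) hu
  simp only [map_add, pderiv_C_mul, pderiv_linForm_pow, Fin.sum_univ_three,
    Fin.prod_univ_three] at hev
  have e0 := hev ![1, 0, 0]
  have e1 := hev ![0, 1, 0]
  have e2 := hev ![0, 0, 1]
  have f0 := hev ![0, 1, 1]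
  have f1 := hev ![1, 0, 1]
  have f2 := hev ![1, 1, 0]
  simp [eval_linForm, pderiv_X, dotProduct, Fin.sum_univ_three] at e0 e1 e2 f0 f1 f2
  obtain ⟨s, hs⟩ : ∃ s, s = 3 * lam * (u 0 * v 0 + u 1 * v 1 + u 2 * v 2) := ⟨_, rfl⟩
  have hsv (j : Fin 3) (hj : s * v j ^ 2 = 0) : s * v j = 0 :=
    pow_eq_zero_iff two_ne_zero |>.mp (by linear_combination s * hj)
  have h0 := hsv 0 (by linear_combination e0 + v 0 ^ 2 * hs)
  have h1 := hsv 1 (by linear_combination e1 + v 1 ^ 2 * hs)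
  have h2 := hsv 2 (by linear_combination e2 + v 2 ^ 2 * hs)
  intro i
  fin_cases i
  · show u 0 = 0
    linear_combination f0 + (v 1 + v 2) ^ 2 * hs - (v 1 + v 2) * (h1 + h2)
  · show u 1 = 0
    linear_combination f1 + (v 0 + v 2) ^ 2 * hs - (v 0 + v 2) * (h0 + h2)
  · show u 2 = 0
    linear_combination f2 + (v 0 + v 1) ^ 2 * hs - (v 0 + v 1) * (h0 + h1)

theorem pderiv_pderiv_prod_X_add_C_mul_linForm_pow (lam : ℂ) {v : Fin 3 → ℂ} {k : Fin 3}
    (hk : v k = 0) :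
    pderiv k (pderiv k (∏ i, X i + C lam * linForm v ^ 3)) = 0 := by
  have hprod : pderiv k (pderiv k (∏ i : Fin 3, X i : MvPolynomial (Fin 3) ℂ)) = 0 := by
    fin_cases k <;> simp [Fin.prod_univ_three, pderiv_X]
  simp [hprod, pderiv_linForm, hk]

theorem hasWaringDecomposition_prod_X :
    HasWaringDecomposition 3 4 (∏ i : Fin 3, X i : MvPolynomial (Fin 3) ℂ) := by
  refine ⟨![![1, 1, 1], ![1, -1, -1], ![-1, 1, -1], ![-1, -1, 1]], ![1/24, 1/24, 1/24, 1/24], ?_⟩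
  apply MvPolynomial.funext
  intro x
  simp [eval_linForm, Fin.sum_univ_four, Fin.prod_univ_three, dotProduct, Fin.sum_univ_three]
  ring

-- The four points of each decomposition below are the base locus of a pencil of conics apolar to
-- the cubic.
theorem hasWaringDecomposition_prod_X_add_X_pow :
    HasWaringDecomposition 3 4 (∏ i : Fin 3, X i + X 0 ^ 3 : MvPolynomial (Fin 3) ℂ) := by
  refine ⟨![![4, 1, 1], ![-4, 1, 1], ![2, -1, 1], ![-2, -1, 1]], ![1/96, -1/96, -1/48, 1/48], ?_⟩
  apply MvPolynomial.funext
  intro x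
  simp [eval_linForm, Fin.sum_univ_four, Fin.prod_univ_three, dotProduct, Fin.sum_univ_three]
  ring

theorem hasWaringDecomposition_prod_X_add_X_add_X_pow :
    HasWaringDecomposition 3 4 (∏ i : Fin 3, X i + (X 0 + X 1) ^ 3 : MvPolynomial (Fin 3) ℂ) := by
  refine ⟨![![-8, 8, 1], ![8, -8, 1], ![16, 16, 1], ![-4, -4, 1]],
    ![-1/1536, -1/1536, 1/3840, 1/960], ?_⟩
  apply MvPolynomial.funext
  intro x
  simp [eval_linForm, Fin.sum_univ_four, Fin.prod_univ_three, dotProduct, Fin.sum_univ_three]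
  ring

theorem hasWaringDecomposition_prod_X_add_linForm_pow {w : Fin 3 → ℂ} (hw : w 2 = 0) :
    HasWaringDecomposition 3 4 (∏ i, X i + linForm w ^ 3) := by
  have hℓ : linForm w = C (w 0) * X 0 + C (w 1) * X 1 := by
    simp [linForm, Fin.sum_univ_three, hw]
  rw [hℓ]
  rcases eq_or_ne (w 0) 0 with h0 | h0 <;> rcases eq_or_ne (w 1) 0 with h1 | h1
  · simpa [h0, h1] using hasWaringDecomposition_prod_X
  · convert hasWaringDecomposition_prod_X_add_X_pow.aeval
      ![![0, w 1, 0], ![1, 0, 0], ![0, 0, (w 1)⁻¹]] using 1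
    apply MvPolynomial.funext
    intro x
    simp [eval_linForm, Fin.prod_univ_three, dotProduct, Fin.sum_univ_three, h0]
    field_simp
  · convert hasWaringDecomposition_prod_X_add_X_pow.aeval
      ![![w 0, 0, 0], ![0, 1, 0], ![0, 0, (w 0)⁻¹]] using 1
    apply MvPolynomial.funext
    intro x
    simp [eval_linForm, Fin.prod_univ_three, dotProduct, Fin.sum_univ_three, h1]
    field_simp
  · convert hasWaringDecomposition_prod_X_add_X_add_X_pow.aeval
      ![![w 0, 0, 0], ![0, w 1, 0], ![0, 0, (w 0 * w 1)⁻¹]] using 1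
    apply MvPolynomial.funext
    intro x
    simp [eval_linForm, Fin.prod_univ_three, dotProduct, Fin.sum_univ_three]
    field_simp

theorem hasWaringDecomposition_prod_X_add_C_mul_linForm_pow (lam : ℂ) {v : Fin 3 → ℂ} {k : Fin 3}
    (hk : v k = 0) : HasWaringDecomposition 3 4 (∏ i, X i + C lam * linForm v ^ 3) := by
  obtain ⟨μ, hμ⟩ := IsAlgClosed.exists_pow_nat_eq lam three_pos
  let σ := Equiv.swap k 2
  convert (hasWaringDecomposition_prod_X_add_linForm_pow (w := μ • v ∘ σ)
    (by simp [σ, hk])).rename σ using 1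
  have hprod : ∏ i, X (σ i) = (∏ i, X i : MvPolynomial (Fin 3) ℂ) := Equiv.prod_comp σ X
  have hℓ : rename σ (linForm (μ • v ∘ σ)) = C μ * linForm v := by
    simp only [linForm, map_sum, map_mul, rename_C, rename_X, Pi.smul_apply, Function.comp_apply,
      smul_eq_mul, Finset.mul_sum, ← mul_assoc]
    exact Equiv.sum_comp σ fun j => C μ * C (v j) * X j
  rw [map_add, map_prod, map_pow, hℓ, mul_pow, ← map_pow, hμ]
  simp only [rename_X, hprod]

theorem stmt12_general (a b c lam : ℂ) (habc : a * b * c = 0) :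
    waringRank 3
      ((X 0 * X 1 * X 2 + C lam * (C a * X 0 + C b * X 1 + C c * X 2) ^ 3 :
        MvPolynomial (Fin 3) ℂ)) = 4 := by
  obtain ⟨k, -, hk⟩ : ∃ k ∈ Finset.univ, ![a, b, c] k = 0 :=
    Finset.prod_eq_zero_iff.mp (by simpa [Fin.prod_univ_three] using habc)
  have hf : (X 0 * X 1 * X 2 + C lam * (C a * X 0 + C b * X 1 + C c * X 2) ^ 3 :
      MvPolynomial (Fin 3) ℂ) = ∏ i, X i + C lam * linForm ![a, b, c] ^ 3 := by
    simp [linForm, Fin.sum_univ_three, Fin.prod_univ_three]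
  rw [hf]
  exact waringRank_eq_succ (hasWaringDecomposition_prod_X_add_C_mul_linForm_pow lam hk)
    (not_hasWaringDecomposition_of_linearIndependent_pderiv
      (linearIndependent_pderiv_prod_X_add_C_mul_linForm_pow lam _)
      (pderiv_pderiv_prod_X_add_C_mul_linForm_pow lam hk))

/-- For `f = xyz + λ(ax+by+cz)³` with `λ ≠ 0` and `abc = 0`, `R(f) = 4`. -/
theorem stmt12 (a b c lam : ℂ) (hlam : lam ≠ 0) (habc : a * b * c = 0) :
    waringRank 3
      ((X 0 * X 1 * X 2 + C lam * (C a * X 0 + C b * X 1 + C c * X 2) ^ 3 :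
        MvPolynomial (Fin 3) ℂ)) = 4 :=
  stmt12_general a b c lam habc
end

section
/- Cayley–Bacharach from two decompositions: Let f be a homogeneous polynomial of degree d over ℂ and let 𝕏, 𝕐 ⊆ ℙ^n be two disjoint irredundant Waring decompositions of f. Then 𝕏 ∪ 𝕐 satisfies the Cayley–Bacharach property in degree d: every form of degree d vanishing on all but one point of 𝕏 ∪ 𝕐 vanishes at the remaining point as well. -/
open MvPolynomial

/-- A finite set of points of `ℙⁿ` is a Waring decomposition of `f` (of degree `d`)
if `f` lies in the span of the `d`-th powers of linear forms representing the points. -/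
noncomputable def isDecomp {n : ℕ} (d : ℕ) (f : MvPolynomial (Fin (n+1)) ℂ)
    (D : Finset (Projectivization ℂ (Fin (n+1) → ℂ))) : Prop :=
  f ∈ Submodule.span ℂ
    ((fun p : Projectivization ℂ (Fin (n+1) → ℂ) => (linForm p.rep) ^ d) '' D)

/-! The apolarity pairing `⟨F, G⟩ = ∑ₘ m! F_m G_m` is linear in `G` and satisfies
`⟨F, ℓ_a^d⟩ = d! F(a)` for a form `F` of degree `d`. Let `p ∈ 𝕏` and let `F` vanish on
`(𝕏 ∪ 𝕐) \ {p}`. Then `⟨F, ·⟩` kills `ℓ_q^d` for all `q ∈ 𝕐`, hence kills `f`. Writing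
`f = c ℓ_p^d + (a combination of ℓ_q^d, q ∈ 𝕏 \ {p})` gives `c d! F(p) = 0`, and `c ≠ 0`
by irredundancy of `𝕏`, so `F(p) = 0`. -/

open Nat

section Apolarity

variable {σ R : Type*} [CommSemiring R]

noncomputable def apolarPairing (F : MvPolynomial σ R) : MvPolynomial σ R →ₗ[R] R :=
  ∑ m ∈ F.support, ((m.prod fun _ e => (e ! : R)) * coeff m F) • lcoeff R m

theorem apolarPairing_sum_smul_X_pow [Fintype σ] {F : MvPolynomial σ R} {d : ℕ}
    (hF : F.IsHomogeneous d) (a : σ → R) :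
    apolarPairing F ((∑ i, a i • X i) ^ d) = d ! * eval a F := by
  rw [apolarPairing, eval_eq, Finset.mul_sum]
  simp only [LinearMap.sum_apply, LinearMap.smul_apply, lcoeff_apply, smul_eq_mul,
    coeff_linearCombination_X_pow_of_fintype]
  refine Finset.sum_congr rfl fun m hm => ?_
  have hdeg : (m.sum fun _ e => e) = d := by
    simpa [Finsupp.weight_apply] using hF (mem_support_iff.mp hm)
  rw [if_pos hdeg, ← hdeg, Finsupp.multinomial_eq, Finsupp.sum, ← Nat.multinomial_spec]
  push_cast
  simp only [Finsupp.prod]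
  ring

end Apolarity

theorem linForm_eq_sum_smul_X {n : ℕ} (a : Fin n → ℂ) : linForm a = ∑ j, a j • X j := by
  simp [linForm, smul_eq_C_mul]

theorem apolarPairing_linForm_pow {n d : ℕ} {F : MvPolynomial (Fin n) ℂ}
    (hF : F.IsHomogeneous d) (a : Fin n → ℂ) :
    apolarPairing F (linForm a ^ d) = d ! * eval a F := by
  rw [linForm_eq_sum_smul_X, apolarPairing_sum_smul_X_pow hF]

theorem Submodule.mem_span_of_mem_span_insert_of_subset_ker {K M : Type*} [Field K]
    [AddCommGroup M] [Module K M] {g : M →ₗ[K] K} {s : Set M} {v x : M}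
    (hx : x ∈ span K (insert v s)) (hs : s ⊆ LinearMap.ker g) (hgx : g x = 0) (hgv : g v ≠ 0) :
    x ∈ span K s := by
  obtain ⟨a, z, hz, rfl⟩ := mem_span_insert.mp hx
  have hgz : g z = 0 := span_le.mpr hs hz
  have ha : a = 0 := by simpa [hgz, hgv] using hgx
  simpa [ha] using hz

theorem eval_rep_eq_zero_of_isDecomp {n d : ℕ}
    [DecidableEq (Projectivization ℂ (Fin (n+1) → ℂ))]
    {f F : MvPolynomial (Fin (n+1)) ℂ} {XX YY : Finset (Projectivization ℂ (Fin (n+1) → ℂ))}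
    {p : Projectivization ℂ (Fin (n+1) → ℂ)}
    (hX : isDecomp d f XX) (hXirr : ∀ S ⊂ XX, ¬ isDecomp d f S) (hY : isDecomp d f YY)
    (hpX : p ∈ XX) (hpY : p ∉ YY) (hF : F.IsHomogeneous d)
    (hvan : ∀ q ∈ (XX ∪ YY).erase p, eval q.rep F = 0) :
    eval p.rep F = 0 := by
  by_contra hFp
  have hpow (q : Projectivization ℂ (Fin (n+1) → ℂ)) :
      apolarPairing F (linForm q.rep ^ d) = d ! * eval q.rep F :=
    apolarPairing_linForm_pow hF q.rep
  have hker (q) (hq : q ∈ (XX ∪ YY).erase p) : apolarPairing F (linForm q.rep ^ d) = 0 := by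
    simp [hpow, hvan q hq]
  have hf : apolarPairing F f = 0 := by
    refine LinearMap.mem_ker.mp (Submodule.span_le.mpr ?_ hY)
    rintro _ ⟨q, hq, rfl⟩
    have hqp : q ≠ p := by rintro rfl; exact hpY hq
    exact hker q (Finset.mem_erase.mpr ⟨hqp, Finset.mem_union_right _ hq⟩)
  refine hXirr (XX.erase p) (Finset.erase_ssubset hpX) ?_
  refine Submodule.mem_span_of_mem_span_insert_of_subset_ker ?_ ?_ hf
    (by simp [hpow, hFp, Nat.factorial_ne_zero] : apolarPairing F (linForm p.rep ^ d) ≠ 0)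
  · rwa [isDecomp, ← Finset.insert_erase hpX, Finset.coe_insert, Set.image_insert_eq] at hX
  · rintro _ ⟨q, hq, rfl⟩
    obtain ⟨hqp, hqX⟩ := Finset.mem_erase.mp hq
    exact hker q (Finset.mem_erase.mpr ⟨hqp, Finset.mem_union_left _ hqX⟩)

open scoped Classical in
theorem stmt16_general (n d : ℕ) (f : MvPolynomial (Fin (n+1)) ℂ)
    (XX YY : Finset (Projectivization ℂ (Fin (n+1) → ℂ))) (hdisj : Disjoint XX YY)
    (hX : isDecomp d f XX) (hXirr : ∀ S ⊂ XX, ¬ isDecomp d f S)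
    (hY : isDecomp d f YY) (hYirr : ∀ S ⊂ YY, ¬ isDecomp d f S) :
    ∀ p ∈ XX ∪ YY, ∀ F : MvPolynomial (Fin (n+1)) ℂ, F.IsHomogeneous d →
      (∀ q ∈ (XX ∪ YY).erase p, eval (Projectivization.rep q) F = 0) →
      eval (Projectivization.rep p) F = 0 := by
  intro p hp F hF hvan
  rcases Finset.mem_union.mp hp with hpX | hpY
  · exact eval_rep_eq_zero_of_isDecomp hX hXirr hY hpX (Finset.disjoint_left.mp hdisj hpX) hF hvan
  · rw [Finset.union_comm] at hvan
    exact eval_rep_eq_zero_of_isDecomp hY hYirr hX hpY (Finset.disjoint_right.mp hdisj hpY) hF hvan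

open scoped Classical in
/-- If `𝕏, 𝕐` are disjoint irredundant Waring decompositions of a degree-`d` form `f`,
then `𝕏 ∪ 𝕐` satisfies the Cayley–Bacharach property in degree `d`. -/
theorem stmt16 (n d : ℕ) (f : MvPolynomial (Fin (n+1)) ℂ) (hf : f.IsHomogeneous d)
    (XX YY : Finset (Projectivization ℂ (Fin (n+1) → ℂ))) (hdisj : Disjoint XX YY)
    (hX : isDecomp d f XX) (hXirr : ∀ S ⊂ XX, ¬ isDecomp d f S)
    (hY : isDecomp d f YY) (hYirr : ∀ S ⊂ YY, ¬ isDecomp d f S) :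
    ∀ p ∈ XX ∪ YY, ∀ F : MvPolynomial (Fin (n+1)) ℂ, F.IsHomogeneous d →
      (∀ q ∈ (XX ∪ YY).erase p, eval (Projectivization.rep q) F = 0) →
      eval (Projectivization.rep p) F = 0 :=
  stmt16_general n d f XX YY hdisj hX hXirr hY hYirr
end
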